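/- Let k be an even positive integer and let χ : SL(2,ℤ) → ℂˣ be the unique group homomorphism with χ(S) = χ(T) = -1. The map sending f to the function τ ↦ f(2τ) is a ℂ-linear bijection from the space {f : f is a cusp form of weight k for Γ(2) and f∣[k]γ = χ(γ)·f for all γ ∈ SL(2,ℤ)} onto the space {g : g is a cusp form of weight k for Γ₀(4), g∣[k]W₄ = -g, and g∣[k]T_{1/2} = -g}. -/

import Mathlib

/-!
Let `D = diag(2, 1)`, so that `(f ∣[k] D)(τ) = 2^(k/2) f(2τ)`. Conjugation by `D` maps `Γ₀(4)` onto
`Γ(2)`, so `f ↦ f ∣[k] D` is an isomorphism from the cusp forms of weight `k` for `Γ(2)` onto those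
for `Γ₀(4)`. Since `D W₄ = 2 · S D`, `D T_{1/2} = T D` and positive scalar matrices act trivially,
`f ∣[k] D` is a `-1`-eigenform of `W₄` and `T_{1/2}` exactly when `f` is a `-1`-eigenform of `S`
and `T`; as `S` and `T` generate `SL(2, ℤ)`, this means that `f` transforms by `χ`.
-/

open UpperHalfPlane Matrix MatrixGroups CongruenceSubgroup

noncomputable section

/-- An element of `GL(2,ℝ)⁺` built from a 2×2 real matrix of positive determinant. -/
def mkGLPos (M : Matrix (Fin 2) (Fin 2) ℝ) (h : 0 < M.det) : GL(2, ℝ)⁺ :=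
  ⟨Matrix.GeneralLinearGroup.mkOfDetNeZero M h.ne', by
    simpa [Matrix.mem_glpos, Matrix.GeneralLinearGroup.val_det_apply,
      Matrix.GeneralLinearGroup.mkOfDetNeZero] using h⟩

set_option synthInstance.maxHeartbeats 400000 in
/-- The weight-`k` slash operator with the classical normalization
`(f ∣[k] A)(τ) = det(A)^(k/2) · (cτ+d)^(-k) · f(Aτ)`. -/
def wtSlash (k : ℤ) (A : GL(2, ℝ)⁺) (f : ℍ → ℂ) : ℍ → ℂ := fun τ =>
  ((((A : GL (Fin 2) ℝ) : Matrix (Fin 2) (Fin 2) ℝ).det ^ ((k : ℝ) / 2) : ℝ) : ℂ) *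
    (UpperHalfPlane.denom A τ) ^ (-k) * f (A • τ)

/-- The image of an integral special linear matrix in `GL(2,ℝ)⁺`. -/
def toGL (γ : SL(2, ℤ)) : GL(2, ℝ)⁺ :=
  Matrix.SpecialLinearGroup.toGLPos (γ.map (Int.castRingHom ℝ))

/-- `W₄ = [[0,-1],[4,0]]` as an element of `GL(2,ℝ)⁺`. -/
def W4 : GL(2, ℝ)⁺ := mkGLPos !![0, -1; 4, 0] (by norm_num [Matrix.det_fin_two_of])

/-- `T_{1/2} = [[1,1/2],[0,1]]` as an element of `GL(2,ℝ)⁺`. -/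
def Thalf : GL(2, ℝ)⁺ := mkGLPos !![1, 1/2; 0, 1] (by norm_num [Matrix.det_fin_two_of])

/-- The map `τ ↦ 2τ` on the upper half-plane. -/
def double (τ : ℍ) : ℍ := ⟨2 * (τ : ℂ), by simpa [Complex.mul_im] using τ.2⟩

lemma wtSlash_add (k : ℤ) (A : GL(2, ℝ)⁺) (f g : ℍ → ℂ) :
    wtSlash k A (f + g) = wtSlash k A f + wtSlash k A g := by
  funext τ
  simp only [wtSlash, Pi.add_apply]
  ring

lemma wtSlash_smul (k : ℤ) (A : GL(2, ℝ)⁺) (c : ℂ) (f : ℍ → ℂ) :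
    wtSlash k A (c • f) = c • wtSlash k A f := by
  funext τ
  simp only [wtSlash, Pi.smul_apply, smul_eq_mul]
  ring

lemma wtSlash_zero (k : ℤ) (A : GL(2, ℝ)⁺) : wtSlash k A (0 : ℍ → ℂ) = 0 := by
  funext τ
  simp [wtSlash]

/-- The space of cusp forms of weight `k` for `Γ(2)` transforming under `SL(2,ℤ)` by the
character `χ`. -/
def chiSpace (k : ℤ) (χ : SL(2, ℤ) →* ℂˣ) : Submodule ℂ (CuspForm (Gamma 2) k) where
  carrier := {f | ∀ γ : SL(2, ℤ), wtSlash k (toGL γ) ⇑f = (χ γ : ℂ) • ⇑f}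
  add_mem' := by
    intro f g hf hg γ
    rw [CuspForm.coe_add, wtSlash_add, hf γ, hg γ, smul_add]
  zero_mem' := by
    intro γ
    rw [CuspForm.coe_zero, wtSlash_zero, smul_zero]
  smul_mem' := by
    intro c f hf γ
    rw [CuspForm.coe_smul, wtSlash_smul, hf γ, smul_comm]

/-- The space of cusp forms of weight `k` for `Γ₀(4)` with eigenvalue `-1` under both the
Fricke involution `W₄` and the operator `T_{1/2}`. -/
def minusSpace (k : ℤ) : Submodule ℂ (CuspForm (Gamma0 4) k) where
  carrier := {g | wtSlash k W4 ⇑g = -⇑g ∧ wtSlash k Thalf ⇑g = -⇑g}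
  add_mem' := by
    intro f g hf hg
    refine ⟨?_, ?_⟩
    · rw [CuspForm.coe_add, wtSlash_add, hf.1, hg.1]; abel
    · rw [CuspForm.coe_add, wtSlash_add, hf.2, hg.2]; abel
  zero_mem' := by
    refine ⟨?_, ?_⟩ <;> rw [CuspForm.coe_zero, wtSlash_zero] <;> simp
  smul_mem' := by
    intro c f hf
    refine ⟨?_, ?_⟩
    · rw [CuspForm.coe_smul, wtSlash_smul, hf.1]; simp
    · rw [CuspForm.coe_smul, wtSlash_smul, hf.2]; simp

open ModularForm ModularGroup ConjAct Pointwise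
open Matrix.SpecialLinearGroup (mapGL)

lemma det_glPos_pos (A : GL(2, ℝ)⁺) : 0 < ((A : GL (Fin 2) ℝ) : Matrix (Fin 2) (Fin 2) ℝ).det :=
  A.2

@[simp]
lemma coe_mkGLPos (M : Matrix (Fin 2) (Fin 2) ℝ) (h : 0 < M.det) :
    ((mkGLPos M h : GL (Fin 2) ℝ) : Matrix (Fin 2) (Fin 2) ℝ) = M :=
  rfl

lemma real_smul_slash (k : ℤ) (A : GL (Fin 2) ℝ) (r : ℝ) (f : ℍ → ℂ) :
    (r • f) ∣[k] A = r • f ∣[k] A := by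
  simp only [← Complex.coe_smul, smul_slash, σ_ofReal]

@[simp]
lemma coe_toGL (γ : SL(2, ℤ)) :
    ((toGL γ : GL (Fin 2) ℝ) : Matrix (Fin 2) (Fin 2) ℝ) = (γ : Matrix (Fin 2) (Fin 2) ℤ).map (↑) :=
  rfl

def wtSlashFactor (k : ℤ) (A : GL(2, ℝ)⁺) : ℝ :=
  ((A : GL (Fin 2) ℝ) : Matrix (Fin 2) (Fin 2) ℝ).det ^ ((k : ℝ) / 2) /
    ((A : GL (Fin 2) ℝ) : Matrix (Fin 2) (Fin 2) ℝ).det ^ (k - 1)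

lemma wtSlashFactor_mul (k : ℤ) (A B : GL(2, ℝ)⁺) :
    wtSlashFactor k (A * B) = wtSlashFactor k A * wtSlashFactor k B := by
  simp only [wtSlashFactor, Subgroup.coe_mul, Units.val_mul, Matrix.det_mul]
  rw [Real.mul_rpow (det_glPos_pos A).le (det_glPos_pos B).le, mul_zpow]
  ring

/-- Mathlib's slash action is normalised by `|det A| ^ (k - 1)` instead of `det A ^ (k / 2)`. -/
lemma wtSlash_eq_smul_slash (k : ℤ) (A : GL(2, ℝ)⁺) (f : ℍ → ℂ) :
    wtSlash k A f = wtSlashFactor k A • f ∣[k] (A : GL (Fin 2) ℝ) := by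
  have hA := det_glPos_pos A
  have hA' : ((((A : GL (Fin 2) ℝ) : Matrix (Fin 2) (Fin 2) ℝ).det : ℂ)) ^ (k - 1) ≠ 0 :=
    zpow_ne_zero _ (by exact_mod_cast hA.ne')
  funext τ
  simp only [wtSlash, wtSlashFactor, slash_apply, σ, Pi.smul_apply,
    Matrix.GeneralLinearGroup.val_det_apply, hA, if_true, abs_of_pos hA,
    ContinuousAlgEquiv.refl_apply, Complex.real_smul, Complex.ofReal_div, Complex.ofReal_zpow]
  field_simp
  rfl

lemma wtSlash_mul (k : ℤ) (A B : GL(2, ℝ)⁺) (f : ℍ → ℂ) :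
    wtSlash k (A * B) f = wtSlash k B (wtSlash k A f) := by
  simp only [wtSlash_eq_smul_slash, wtSlashFactor_mul, Subgroup.coe_mul, SlashAction.slash_mul,
    mul_smul, real_smul_slash]
  rw [smul_comm]

lemma wtSlash_one (k : ℤ) (f : ℍ → ℂ) : wtSlash k 1 f = f := by
  simp [wtSlash_eq_smul_slash, wtSlashFactor]

lemma wtSlash_neg (k : ℤ) (A : GL(2, ℝ)⁺) (f : ℍ → ℂ) : wtSlash k A (-f) = -wtSlash k A f := by
  simpa using wtSlash_smul k A (-1) f

lemma wtSlash_injective (k : ℤ) (A : GL(2, ℝ)⁺) : Function.Injective (wtSlash k A) := by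
  intro f g h
  simpa [← wtSlash_mul, wtSlash_one] using congrArg (wtSlash k A⁻¹) h

lemma wtSlash_toGL (k : ℤ) (γ : SL(2, ℤ)) (f : ℍ → ℂ) : wtSlash k (toGL γ) f = f ∣[k] γ := by
  have h1 : ((toGL γ : GL (Fin 2) ℝ) : Matrix (Fin 2) (Fin 2) ℝ).det = 1 :=
    Matrix.SpecialLinearGroup.det_coe _
  rw [wtSlash_eq_smul_slash, wtSlashFactor, h1, Real.one_rpow, _root_.one_zpow, div_one, one_smul]
  rfl

lemma wtSlash_wtSlash_eq_neg_iff {k : ℤ} {A B C : GL(2, ℝ)⁺} (h : C * A = B * C) (f : ℍ → ℂ) :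
    wtSlash k A (wtSlash k C f) = -wtSlash k C f ↔ wtSlash k B f = -f := by
  rw [← wtSlash_mul, h, wtSlash_mul, ← wtSlash_neg, (wtSlash_injective k C).eq_iff]

def scalarGLPos (c : ℝ) (hc : 0 < c) : GL(2, ℝ)⁺ :=
  mkGLPos (c • 1) (by simpa [Matrix.det_smul] using pow_pos hc 2)

lemma scalarGLPos_smul (c : ℝ) (hc : 0 < c) (τ : ℍ) : scalarGLPos c hc • τ = τ := by
  have : (scalarGLPos c hc : GL (Fin 2) ℝ) =
      GeneralLinearGroup.scalar (Fin 2) (Units.mk0 c hc.ne') := by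
    ext i j
    fin_cases i <;> fin_cases j <;> simp [scalarGLPos]
  exact (congrArg (· • τ) this).trans (glScalar_smul _ τ)

lemma wtSlash_scalarGLPos (k : ℤ) (c : ℝ) (hc : 0 < c) (f : ℍ → ℂ) :
    wtSlash k (scalarGLPos c hc) f = f := by
  funext τ
  have hdet : ((scalarGLPos c hc : GL (Fin 2) ℝ) : Matrix (Fin 2) (Fin 2) ℝ).det ^ ((k : ℝ) / 2)
      = c ^ k := by
    simp only [scalarGLPos, coe_mkGLPos, Matrix.det_smul, Matrix.det_one, Fintype.card_fin,
      mul_one]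
    rw [← Real.rpow_natCast, ← Real.rpow_mul hc.le, ← Real.rpow_intCast]
    congr 1
    push_cast
    ring
  have hdenom : denom (scalarGLPos c hc : GL (Fin 2) ℝ) τ = c := by
    simp [scalarGLPos, denom]
  simp only [wtSlash, hdet, hdenom, scalarGLPos_smul, Complex.ofReal_zpow]
  rw [_root_.zpow_neg, mul_inv_cancel₀ (zpow_ne_zero _ (by exact_mod_cast hc.ne')), one_mul]

lemma slash_eq_smul_of_slash_S_of_slash_T {k : ℤ} (χ : SL(2, ℤ) →* ℂˣ) {f : ℍ → ℂ}
    (hS : f ∣[k] S = (χ S : ℂ) • f) (hT : f ∣[k] T = (χ T : ℂ) • f) (γ : SL(2, ℤ)) :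
    f ∣[k] γ = (χ γ : ℂ) • f := by
  have hγ : γ ∈ Subgroup.closure {S, T} := by simp [SpecialLinearGroup.SL2Z_generators]
  induction hγ using Subgroup.closure_induction with
  | mem x hx =>
    rcases hx with rfl | rfl
    exacts [hS, hT]
  | one => simp
  | mul x y _ _ hx hy =>
    rw [SlashAction.slash_mul, hx, SL_smul_slash, hy, smul_smul, map_mul, Units.val_mul, mul_comm]
  | inv x _ hx =>
    rw [map_inv, Units.val_inv_eq_inv_val, eq_inv_smul_iff₀ (χ x).ne_zero, ← SL_smul_slash, ← hx,
      ← SlashAction.slash_mul, mul_inv_cancel, SlashAction.slash_one]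

lemma mem_chiSpace_iff {k : ℤ} {χ : SL(2, ℤ) →* ℂˣ} (hS : (χ S : ℂ) = -1) (hT : (χ T : ℂ) = -1)
    (f : CuspForm (Gamma 2) k) :
    f ∈ chiSpace k χ ↔ wtSlash k (toGL S) f = -f ∧ wtSlash k (toGL T) f = -f := by
  refine ⟨fun hf ↦ ⟨by simpa [hS] using hf S, by simpa [hT] using hf T⟩, ?_⟩
  rintro ⟨hfS, hfT⟩ γ
  rw [wtSlash_toGL] at hfS hfT ⊢
  exact slash_eq_smul_of_slash_S_of_slash_T χ (by rw [hfS, hS, neg_one_smul])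
    (by rw [hfT, hT, neg_one_smul]) γ

def CuspForm.restrict {Γ Γ' : Subgroup (GL (Fin 2) ℝ)} {k : ℤ} (h : Γ' ≤ Γ) (f : CuspForm Γ k) :
    CuspForm Γ' k where
  toFun := f
  slash_action_eq' γ hγ := f.slash_action_eq' γ (h hγ)
  holo' := f.holo'
  zero_at_cusps' hc := f.zero_at_cusps' (hc.mono h)

section wtSlashCuspForm

variable {Γ Γ' : Subgroup (GL (Fin 2) ℝ)} {k : ℤ}

def wtSlashCuspForm (A : GL(2, ℝ)⁺) (h : Γ' ≤ toConjAct (A : GL (Fin 2) ℝ)⁻¹ • Γ)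
    (f : CuspForm Γ k) : CuspForm Γ' k :=
  (CuspForm.restrict h (wtSlashFactor k A • CuspForm.translate f A)).copy (wtSlash k A f)
    (wtSlash_eq_smul_slash k A f)

@[simp]
lemma coe_wtSlashCuspForm (A : GL(2, ℝ)⁺) (h : Γ' ≤ toConjAct (A : GL (Fin 2) ℝ)⁻¹ • Γ)
    (f : CuspForm Γ k) : ⇑(wtSlashCuspForm A h f) = wtSlash k A f :=
  rfl

variable (k) in
def wtSlashEquiv [Γ.HasDetOne] [Γ'.HasDetOne] (A : GL(2, ℝ)⁺)
    (h : Γ' ≤ toConjAct (A : GL (Fin 2) ℝ)⁻¹ • Γ)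
    (h' : Γ ≤ toConjAct ((A⁻¹ : GL(2, ℝ)⁺) : GL (Fin 2) ℝ)⁻¹ • Γ') :
    CuspForm Γ k ≃ₗ[ℂ] CuspForm Γ' k where
  toFun := wtSlashCuspForm A h
  invFun := wtSlashCuspForm A⁻¹ h'
  map_add' f g := by ext; simp [wtSlash_add]
  map_smul' c f := by ext; simp [wtSlash_smul]
  left_inv f := by ext; simp [← wtSlash_mul, wtSlash_one]
  right_inv f := by ext; simp [← wtSlash_mul, wtSlash_one]

end wtSlashCuspForm

lemma coe_le_conjAct_smul_coe {Γ Γ' : Subgroup SL(2, ℤ)} {g : GL (Fin 2) ℝ}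
    (h : ∀ γ ∈ Γ', ∃ γ' ∈ Γ, g * mapGL ℝ γ = mapGL ℝ γ' * g) :
    (Γ' : Subgroup (GL (Fin 2) ℝ)) ≤ toConjAct g⁻¹ • (Γ : Subgroup (GL (Fin 2) ℝ)) := by
  rintro _ ⟨γ, hγ, rfl⟩
  obtain ⟨γ', hγ', hg⟩ := h γ hγ
  rw [Subgroup.mem_pointwise_smul_iff_inv_smul_mem, ← toConjAct_inv, inv_inv, toConjAct_smul, hg,
    mul_inv_cancel_right]
  exact ⟨γ', hγ', rfl⟩

def doubling : GL(2, ℝ)⁺ := mkGLPos !![2, 0; 0, 1] (by norm_num [Matrix.det_fin_two_of])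

lemma doubling_smul (τ : ℍ) : doubling • τ = double τ := by
  ext
  rw [show doubling • τ = (doubling : GL (Fin 2) ℝ) • τ from rfl,
    coe_smul_of_det_pos (det_glPos_pos doubling)]
  simp [doubling, num, denom, double]

lemma wtSlash_doubling (k : ℤ) (f : ℍ → ℂ) :
    wtSlash k doubling f = ((2 : ℝ) ^ ((k : ℝ) / 2)) • fun τ ↦ f (double τ) := by
  funext τ
  rw [wtSlash, doubling_smul]
  simp [doubling, denom]

lemma doubling_mul_W4 : doubling * W4 = scalarGLPos 2 two_pos * toGL S * doubling := by
  refine Subtype.ext <| Units.ext ?_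
  ext i j
  fin_cases i <;> fin_cases j <;>
    norm_num [doubling, W4, scalarGLPos, coe_S, Matrix.mul_apply, Fin.sum_univ_two]

lemma doubling_mul_Thalf : doubling * Thalf = toGL T * doubling := by
  refine Subtype.ext <| Units.ext ?_
  ext i j
  fin_cases i <;> fin_cases j <;>
    norm_num [doubling, Thalf, coe_T, Matrix.mul_apply, Fin.sum_univ_two]

lemma exists_mem_Gamma_two_of_mem_Gamma0_four {γ : SL(2, ℤ)} (hγ : γ ∈ Gamma0 4) :
    ∃ γ' ∈ Gamma 2, (doubling : GL (Fin 2) ℝ) * mapGL ℝ γ = mapGL ℝ γ' * doubling := by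
  obtain ⟨c, hc⟩ : (4 : ℤ) ∣ γ 1 0 := (ZMod.intCast_zmod_eq_zero_iff_dvd _ 4).mp (Gamma0_mem.mp hγ)
  have hdet := γ.det_coe
  rw [Matrix.det_fin_two] at hdet
  obtain ⟨γ', hγ'⟩ : ∃ γ' : SL(2, ℤ),
      (γ' : Matrix (Fin 2) (Fin 2) ℤ) = !![γ 0 0, 2 * γ 0 1; 2 * c, γ 1 1] :=
    ⟨⟨_, by rw [Matrix.det_fin_two_of]; linear_combination hdet + γ 0 1 * hc⟩, rfl⟩
  have hodd : Odd (γ 0 0 * γ 1 1) := ⟨2 * γ 0 1 * c, by linear_combination hdet + γ 0 1 * hc⟩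
  refine ⟨γ', ?_, ?_⟩
  · simp [hγ', ZMod.intCast_eq_one_iff_odd, Int.odd_mul.mp hodd, show (2 : ZMod 2) = 0 from rfl]
  · ext i j
    fin_cases i <;> fin_cases j <;>
      simp [doubling, Matrix.mul_apply, Fin.sum_univ_two, hc, hγ', Matrix.map_apply] <;> ring

lemma exists_mem_Gamma0_four_of_mem_Gamma_two {γ : SL(2, ℤ)} (hγ : γ ∈ Gamma 2) :
    ∃ γ' ∈ Gamma0 4, mapGL ℝ γ * doubling = (doubling : GL (Fin 2) ℝ) * mapGL ℝ γ' := by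
  obtain ⟨-, hb, hc, -⟩ := Gamma_mem.mp hγ
  obtain ⟨b, hb⟩ := (ZMod.intCast_zmod_eq_zero_iff_dvd _ 2).mp hb
  obtain ⟨c, hc⟩ := (ZMod.intCast_zmod_eq_zero_iff_dvd _ 2).mp hc
  push_cast at hb hc
  have hdet := γ.det_coe
  rw [Matrix.det_fin_two] at hdet
  obtain ⟨γ', hγ'⟩ : ∃ γ' : SL(2, ℤ),
      (γ' : Matrix (Fin 2) (Fin 2) ℤ) = !![γ 0 0, b; 2 * γ 1 0, γ 1 1] :=
    ⟨⟨_, by rw [Matrix.det_fin_two_of]; linear_combination hdet + γ 1 0 * hb⟩, rfl⟩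
  refine ⟨γ', ?_, ?_⟩
  · simp [Gamma0_mem, hγ', hc, ← mul_assoc, show (4 : ZMod 4) = 0 from rfl]
  · ext i j
    fin_cases i <;> fin_cases j <;>
      simp [doubling, Matrix.mul_apply, Fin.sum_univ_two, hb, hγ', Matrix.map_apply] <;> ring

lemma Gamma0_four_le_conjAct_doubling :
    (Gamma0 4 : Subgroup (GL (Fin 2) ℝ)) ≤ toConjAct (doubling : GL (Fin 2) ℝ)⁻¹ • Gamma 2 :=
  coe_le_conjAct_smul_coe fun _ ↦ exists_mem_Gamma_two_of_mem_Gamma0_four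

lemma Gamma_two_le_conjAct_doubling_inv :
    (Gamma 2 : Subgroup (GL (Fin 2) ℝ)) ≤
      toConjAct ((doubling⁻¹ : GL(2, ℝ)⁺) : GL (Fin 2) ℝ)⁻¹ • Gamma0 4 := by
  refine coe_le_conjAct_smul_coe fun γ hγ ↦ ?_
  obtain ⟨γ', hγ', h⟩ := exists_mem_Gamma0_four_of_mem_Gamma_two hγ
  refine ⟨γ', hγ', ?_⟩
  rw [Subgroup.coe_inv, inv_mul_eq_iff_eq_mul, ← mul_assoc, ← h, mul_inv_cancel_right]

def doublingEquiv (k : ℤ) : CuspForm (Gamma 2) k ≃ₗ[ℂ] CuspForm (Gamma0 4) k :=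
  (wtSlashEquiv k doubling Gamma0_four_le_conjAct_doubling Gamma_two_le_conjAct_doubling_inv).trans
    (LinearEquiv.smulOfNeZero ℂ _ (((2 : ℝ) ^ ((k : ℝ) / 2) : ℝ) : ℂ)⁻¹
      (inv_ne_zero (Complex.ofReal_ne_zero.mpr (by positivity))))

lemma doublingEquiv_apply (k : ℤ) (f : CuspForm (Gamma 2) k) (τ : ℍ) :
    doublingEquiv k f τ = f (double τ) := by
  have h2 : (((2 : ℝ) ^ ((k : ℝ) / 2) : ℝ) : ℂ) ≠ 0 := Complex.ofReal_ne_zero.mpr (by positivity)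
  simp [doublingEquiv, wtSlashEquiv, wtSlash_doubling, inv_mul_cancel_left₀ h2]

lemma doublingEquiv_mem_minusSpace_iff {k : ℤ} (f : CuspForm (Gamma 2) k) :
    doublingEquiv k f ∈ minusSpace k ↔
      wtSlash k (toGL S) f = -f ∧ wtSlash k (toGL T) f = -f := by
  rw [doublingEquiv, LinearEquiv.trans_apply, LinearEquiv.smulOfNeZero_apply,
    Submodule.smul_mem_iff _ (inv_ne_zero (Complex.ofReal_ne_zero.mpr (by positivity)))]
  show wtSlash k W4 (wtSlash k doubling f) = -wtSlash k doubling f ∧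
    wtSlash k Thalf (wtSlash k doubling f) = -wtSlash k doubling f ↔ _
  rw [wtSlash_wtSlash_eq_neg_iff doubling_mul_W4, wtSlash_wtSlash_eq_neg_iff doubling_mul_Thalf,
    wtSlash_mul, wtSlash_scalarGLPos]

theorem chiSpace_linear_equiv_minusSpace_general (k : ℤ)
    (χ : SL(2, ℤ) →* ℂˣ) (hS : (χ ModularGroup.S : ℂ) = -1)
    (hT : (χ ModularGroup.T : ℂ) = -1) :
    ∃ e : chiSpace k χ ≃ₗ[ℂ] minusSpace k,
      ∀ (f : chiSpace k χ) (τ : ℍ),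
        ((e f : CuspForm (Gamma0 4) k) : ℍ → ℂ) τ = ((f : CuspForm (Gamma 2) k) : ℍ → ℂ) (double τ) := by
  have hmem (f : CuspForm (Gamma 2) k) : doublingEquiv k f ∈ minusSpace k ↔ f ∈ chiSpace k χ :=
    (doublingEquiv_mem_minusSpace_iff f).trans (mem_chiSpace_iff hS hT f).symm
  have hmap : (chiSpace k χ).map (doublingEquiv k : _ →ₗ[ℂ] _) = minusSpace k := by
    ext g
    rw [Submodule.map_equiv_eq_comap_symm, Submodule.mem_comap, ← hmem,
      LinearEquiv.coe_coe, LinearEquiv.apply_symm_apply]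
  exact ⟨(doublingEquiv k).ofSubmodules _ _ hmap, fun f τ ↦ doublingEquiv_apply k f τ⟩

/-- the map `f ↦ (τ ↦ f(2τ))` is a `ℂ`-linear bijection from the space of
cusp forms of weight `k` for `Γ(2)` transforming by `χ` under `SL(2,ℤ)` onto the space of
cusp forms of weight `k` for `Γ₀(4)` on which `W₄` and `T_{1/2}` act by `-1`. -/
theorem chiSpace_linear_equiv_minusSpace (k : ℤ) (hk : 0 < k) (hke : Even k)
    (χ : SL(2, ℤ) →* ℂˣ) (hS : (χ ModularGroup.S : ℂ) = -1)
    (hT : (χ ModularGroup.T : ℂ) = -1) :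
    ∃ e : chiSpace k χ ≃ₗ[ℂ] minusSpace k,
      ∀ (f : chiSpace k χ) (τ : ℍ),
        ((e f : CuspForm (Gamma0 4) k) : ℍ → ℂ) τ = ((f : CuspForm (Gamma 2) k) : ℍ → ℂ) (double τ) :=
  chiSpace_linear_equiv_minusSpace_general k χ hS hT
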